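/- Let W ⊆ (ℝmax^n)^2 be a closed congruence. Then for all f, g ∈ ℝmax^n: (f,g) ∈ W if, and only if, f̄ = ḡ. -/

import Mathlib

open scoped Classical

noncomputable section

/-- The max-plus semiring `ℝmax = ℝ ∪ {-∞}`. Its `Add` is the max-plus
"multiplication" `a ⊗ b = a + b` (with `-∞` absorbing), its `max` is the
max-plus "addition". -/
abbrev Rmax := WithBot ℝ

/-- The order topology on `WithBot ℝ` (the topology of the metric
`d(a,b) = |exp a - exp b|`). -/
instance : TopologicalSpace Rmax := Preorder.topology Rmax
instance : OrderTopology Rmax := ⟨rfl⟩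

/-- Vectors of the max-plus semimodule `ℝmax^n`. -/
abbrev RmaxVec (n : ℕ) := Fin n → Rmax

/-- The max-plus linear combination `xλ ⊕ yμ`. -/
def maxComb {n : ℕ} (x y : RmaxVec n) (lam mu : Rmax) : RmaxVec n :=
  fun i => max (x i + lam) (y i + mu)

/-- `V ⊆ ℝmax^n` is a (max-plus) subsemimodule. -/
def IsSubsemimodule {n : ℕ} (V : Set (RmaxVec n)) : Prop :=
  ∀ x ∈ V, ∀ y ∈ V, ∀ lam mu : Rmax, maxComb x y lam mu ∈ V

/-- `W ⊆ (ℝmax^n)² ≅ ℝmax^{2n}` is a (max-plus) subsemimodule,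
with the entrywise operations. -/
def IsSubsemimodulePair {n : ℕ} (W : Set (RmaxVec n × RmaxVec n)) : Prop :=
  ∀ p ∈ W, ∀ q ∈ W, ∀ lam mu : Rmax,
    (maxComb p.1 q.1 lam mu, maxComb p.2 q.2 lam mu) ∈ W

/-- A pre-congruence: a subsemimodule of `(ℝmax^n)²` containing the diagonal
and transitive. -/
def IsPrecongruence {n : ℕ} (W : Set (RmaxVec n × RmaxVec n)) : Prop :=
  IsSubsemimodulePair W ∧ (∀ f : RmaxVec n, (f, f) ∈ W) ∧
    ∀ f g h : RmaxVec n, (f, g) ∈ W → (g, h) ∈ W → (f, h) ∈ W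

/-- A polar cone: a pre-congruence such that `f ≤ g` implies `(f,g) ∈ W`. -/
def IsPolarCone {n : ℕ} (W : Set (RmaxVec n × RmaxVec n)) : Prop :=
  IsPrecongruence W ∧ ∀ f g : RmaxVec n, f ≤ g → (f, g) ∈ W

/-- A congruence: a symmetric pre-congruence. -/
def IsCongruence {n : ℕ} (W : Set (RmaxVec n × RmaxVec n)) : Prop :=
  IsPrecongruence W ∧ ∀ f g : RmaxVec n, (f, g) ∈ W → (g, f) ∈ W

/-- The max-plus bracket `⟨y, x⟩ = max_i (y_i + x_i)`. -/
def mpBracket {n : ℕ} (y x : RmaxVec n) : Rmax :=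
  Finset.univ.sup fun i => y i + x i

/-- The polar `V°` of `V ⊆ ℝmax^n`. -/
def mpPolar {n : ℕ} (V : Set (RmaxVec n)) : Set (RmaxVec n × RmaxVec n) :=
  { p | ∀ x ∈ V, mpBracket p.1 x ≤ mpBracket p.2 x }

/-- The orthogonal `V⊥` of `V ⊆ ℝmax^n`. -/
def mpOrtho {n : ℕ} (V : Set (RmaxVec n)) : Set (RmaxVec n × RmaxVec n) :=
  { p | ∀ x ∈ V, mpBracket p.1 x = mpBracket p.2 x }

/-- The dual polar `W⋄` of `W ⊆ (ℝmax^n)²`. -/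
def mpDiamond {n : ℕ} (W : Set (RmaxVec n × RmaxVec n)) : Set (RmaxVec n) :=
  { x | ∀ p ∈ W, mpBracket p.1 x ≤ mpBracket p.2 x }

/-- The dual orthogonal `W⊤` of `W ⊆ (ℝmax^n)²`. -/
def mpTop {n : ℕ} (W : Set (RmaxVec n × RmaxVec n)) : Set (RmaxVec n) :=
  { x | ∀ p ∈ W, mpBracket p.1 x = mpBracket p.2 x }

/-- The canonical embedding of `ℝmax = ℝ ∪ {-∞}` into `EReal = ℝ ∪ {±∞}`. -/
def toE : Rmax → EReal := WithBot.recBotCoe ⊥ (fun x => (x : EReal))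

/-- The entrywise supremum `ḡ ∈ EReal^n` of `{ f | (f,g) ∈ W }`,
computed in `EReal`. -/
def ebar {n : ℕ} (W : Set (RmaxVec n × RmaxVec n)) (g : RmaxVec n) :
    Fin n → EReal :=
  fun i => sSup { a : EReal | ∃ f : RmaxVec n, (f, g) ∈ W ∧ a = toE (f i) }

/-- The residuation `u∖x = sSup { λ | ∀ i, u_i + λ ≤ x_i }` in `EReal`. -/
def eres {n : ℕ} (u x : Fin n → EReal) : EReal :=
  sSup { lam : EReal | ∀ i, u i + lam ≤ x i }

/-- `z^β`: the vector in `ℝmax^n` obtained from `z ∈ EReal^n` by replacing the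
entries equal to `+∞` by `β` and keeping the other entries. -/
def cut {n : ℕ} (z : Fin n → EReal) (b : Rmax) : RmaxVec n :=
  fun i => if z i = ⊤ then b else if z i = ⊥ then ⊥ else ((z i).toReal : ℝ)

/-! Members of one class of `W` are closed under `⊔`, and clipping a member `h` of the class of
`g` into the order interval `[g, f ⊔ g]` keeps it in that class (by symmetry and transitivity).
Hence if `f ≤ ḡ` entrywise, the members of the class of `g` below `f ⊔ g` form a directed set
whose entrywise supremum is `f ⊔ g`; since `W` is closed, `(f ⊔ g, g) ∈ W`. When `f̄ = ḡ` this
holds symmetrically, and `f ~ f ⊔ g ~ g`. -/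

open Filter Set

theorem IsLUB.mem_closure_of_directedOn {α : Type*} [Preorder α] [TopologicalSpace α]
    [SupConvergenceClass α] {s : Set α} {a : α} (ha : IsLUB s a) (hne : s.Nonempty)
    (hdir : DirectedOn (· ≤ ·) s) : a ∈ closure s := by
  have := hne.to_subtype
  have := hdir.isDirectedOrder
  exact mem_closure_of_tendsto (SupConvergenceClass.tendsto_coe_atTop_isLUB a s ha)
    (Eventually.of_forall Subtype.prop)

theorem isLUB_pi_of_forall_exists_lt {ι : Type*} {α : ι → Type*} [∀ i, LinearOrder (α i)]
    {s : Set (∀ i, α i)} {a : ∀ i, α i} (hub : a ∈ upperBounds s)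
    (happrox : ∀ i, ∀ b < a i, ∃ v ∈ s, b < v i) : IsLUB s a := by
  refine isLUB_pi.2 fun i => ⟨fun _ ⟨v, hv, hvi⟩ => hvi ▸ hub hv i, fun b hb => ?_⟩
  by_contra! hba
  obtain ⟨v, hv, hbv⟩ := happrox i b hba
  exact hbv.not_ge (hb ⟨v, hv, rfl⟩)

theorem toE_strictMono : StrictMono toE := by
  intro a b hab
  induction b using WithBot.recBotCoe with
  | bot => exact absurd hab not_lt_bot
  | coe y =>
    induction a using WithBot.recBotCoe with
    | bot => exact EReal.bot_lt_coe y
    | coe x => exact EReal.coe_lt_coe_iff.2 (WithBot.coe_lt_coe.1 hab)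

variable {n : ℕ} {W : Set (RmaxVec n × RmaxVec n)}

theorem IsPrecongruence.refl (hW : IsPrecongruence W) (f : RmaxVec n) : (f, f) ∈ W :=
  hW.2.1 f

theorem IsPrecongruence.trans (hW : IsPrecongruence W) {f g h : RmaxVec n} (hfg : (f, g) ∈ W)
    (hgh : (g, h) ∈ W) : (f, h) ∈ W :=
  hW.2.2 f g h hfg hgh

theorem IsCongruence.symm (hW : IsCongruence W) {f g : RmaxVec n} (hfg : (f, g) ∈ W) :
    (g, f) ∈ W :=
  hW.2 f g hfg

theorem maxComb_zero_zero (x y : RmaxVec n) : maxComb x y 0 0 = x ⊔ y := by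
  ext i
  simp [maxComb]

theorem IsSubsemimodulePair.sup_mem (hW : IsSubsemimodulePair W)
    {p q : RmaxVec n × RmaxVec n} (hp : p ∈ W) (hq : q ∈ W) : p ⊔ q ∈ W := by
  have h := hW p hp q hq 0 0
  rw [maxComb_zero_zero, maxComb_zero_zero] at h
  exact h

theorem IsPrecongruence.sup_mem_of_mem_of_mem (hW : IsPrecongruence W) {a b g : RmaxVec n}
    (ha : (a, g) ∈ W) (hb : (b, g) ∈ W) : (a ⊔ b, g) ∈ W := by
  simpa using hW.1.sup_mem ha hb

theorem IsCongruence.mem_of_le_of_le (hW : IsCongruence W) {u v g : RmaxVec n}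
    (hu : (u, g) ∈ W) (hgv : g ≤ v) (hvu : v ≤ u) : (v, g) ∈ W := by
  have huv : (u, v) ∈ W := by
    simpa [sup_eq_left.2 hvu, sup_eq_right.2 hgv] using hW.1.1.sup_mem hu (hW.1.refl v)
  exact hW.1.trans (hW.symm huv) hu

theorem IsCongruence.ebar_eq_of_mem (hW : IsCongruence W) {f g : RmaxVec n}
    (hfg : (f, g) ∈ W) : ebar W f = ebar W g := by
  have hclass : ∀ h, (h, f) ∈ W ↔ (h, g) ∈ W := fun h =>
    ⟨fun hh => hW.1.trans hh hfg, fun hh => hW.1.trans hh (hW.symm hfg)⟩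
  funext i
  simp only [ebar, hclass]

theorem IsPrecongruence.toE_le_ebar (hW : IsPrecongruence W) (g : RmaxVec n) (i : Fin n) :
    toE (g i) ≤ ebar W g i :=
  le_sSup ⟨g, hW.refl g, rfl⟩

theorem exists_mem_lt_of_toE_lt_ebar {g : RmaxVec n} {i : Fin n} {b : Rmax}
    (hb : toE b < ebar W g i) : ∃ h, (h, g) ∈ W ∧ b < h i := by
  obtain ⟨_, ⟨h, hh, rfl⟩, hbh⟩ := lt_sSup_iff.1 hb
  exact ⟨h, hh, toE_strictMono.lt_iff_lt.1 hbh⟩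

theorem IsCongruence.exists_mem_le_sup_lt (hW : IsCongruence W) {f g : RmaxVec n}
    (hf : ∀ i, toE (f i) ≤ ebar W g i) {i : Fin n} {b : Rmax} (hb : b < (f ⊔ g) i) :
    ∃ v, ((v, g) ∈ W ∧ v ≤ f ⊔ g) ∧ b < v i := by
  rcases lt_or_ge b (g i) with hbg | hgb
  · exact ⟨g, ⟨hW.1.refl g, le_sup_right⟩, hbg⟩
  have hbf : b < f i := (lt_max_iff.1 hb).resolve_right hgb.not_gt
  obtain ⟨h, hh, hbh⟩ :=
    exists_mem_lt_of_toE_lt_ebar ((toE_strictMono hbf).trans_le (hf i))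
  refine ⟨(h ⊓ (f ⊔ g)) ⊔ g, ⟨?_, sup_le inf_le_right le_sup_right⟩, ?_⟩
  · exact hW.mem_of_le_of_le (hW.1.sup_mem_of_mem_of_mem hh (hW.1.refl g)) le_sup_right
      (sup_le_sup_right inf_le_left g)
  · exact (lt_min hbh hb).trans_le (le_sup_left (b := g i))

theorem IsCongruence.sup_mem_of_toE_le_ebar (hW : IsCongruence W) (hclosed : IsClosed W)
    {f g : RmaxVec n} (hf : ∀ i, toE (f i) ≤ ebar W g i) : (f ⊔ g, g) ∈ W := by
  set s := {v | (v, g) ∈ W ∧ v ≤ f ⊔ g}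
  have hlub : IsLUB s (f ⊔ g) :=
    isLUB_pi_of_forall_exists_lt (fun _ hv => hv.2) fun _ _ hb => hW.exists_mem_le_sup_lt hf hb
  have hdir : DirectedOn (· ≤ ·) s := fun a ha b hb =>
    ⟨a ⊔ b, ⟨hW.1.sup_mem_of_mem_of_mem ha.1 hb.1, sup_le ha.2 hb.2⟩, le_sup_left, le_sup_right⟩
  have hclass_closed : IsClosed {v | (v, g) ∈ W} :=
    hclosed.preimage (continuous_id.prodMk continuous_const)
  exact closure_minimal (fun _ hv => hv.1) hclass_closed
    (hlub.mem_closure_of_directedOn ⟨g, hW.1.refl g, le_sup_right⟩ hdir)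

/-- Lemma 4.8 (property (17)) of the paper: if `W ⊆ (ℝmax^n)²` is a closed
congruence, then `(f,g) ∈ W` if, and only if, `f̄ = ḡ`. -/
theorem mem_congruence_iff_ebar_eq (n : ℕ) (W : Set (RmaxVec n × RmaxVec n))
    (hclosed : IsClosed W) (hW : IsCongruence W) (f g : RmaxVec n) :
    (f, g) ∈ W ↔ ebar W f = ebar W g := by
  refine ⟨hW.ebar_eq_of_mem, fun h => ?_⟩
  have hfg : (f ⊔ g, g) ∈ W :=
    hW.sup_mem_of_toE_le_ebar hclosed fun i => h ▸ hW.1.toE_le_ebar f i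
  have hgf : (g ⊔ f, f) ∈ W :=
    hW.sup_mem_of_toE_le_ebar hclosed fun i => h ▸ hW.1.toE_le_ebar g i
  rw [sup_comm] at hgf
  exact hW.1.trans (hW.symm hgf) hfg
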